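/- arXiv:2011.00804 — 2 statements merged into one kernel-verified Lean document; each statement's English description precedes it below -/
import Mathlib

section
/- Let $0<c<c_*$, $\lambda_3<0$, $2<p<\frac{10}{3}$, $\delta_p=\frac{3(p-2)}{2p}$, $\Lambda,\mathcal{C}_4,\mathcal{C}_p>0$, and set $t_{c_*}=\frac{2-p\delta_p}{(3-p\delta_p)\Lambda\mathcal{C}_4^4 c_*}$ and $\varphi_c(t)=\frac{1}{2}t^{2-p\delta_p}-\frac{\Lambda\mathcal{C}_4^4 c}{2}t^{3-p\delta_p}$, where $c_*=\big\{\frac{p}{4(3-p\delta_p)|\lambda_3|\mathcal{C}_p^p}\big[\frac{2-p\delta_p}{(3-p\delta_p)\Lambda\mathcal{C}_4^4}\big]^{2-p\delta_p}\big\}^{\frac{1}{2(4-p)}}$. Then $\varphi_c\big(\tfrac{c}{c_*}t_{c_*}\big)>\frac{2|\lambda_3|\mathcal{C}_p^p c^{p(1-\delta_p)}}{p}$. -/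
/-!
Write `a = 2 - pδ_p = (10 - 3p)/2 > 0`, `q = p - 2`, `κ = ΛC₄⁴`, `M = 2|λ₃|C_p^p/p`, so that
`3 - pδ_p = a + 1`, `p(1 - δ_p) = a + q` and `2(4 - p) = 2a + q`. With `s = c/c_* ∈ (0, 1)` and
`τ = s t_{c_*}` one has `φ_c(τ) = τ^a (1 - κcτ)/2` and `κcτ = s²a/(a+1)`, while the definition of
`c_*` turns `τ^a` into `2(a+1)M s^a c_*^{a+q}`. Both sides then share the factor
`M s^a c_*^{a+q}`, and what remains is `s^q ≤ 1 < a + 1 - a s²`.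
-/

open Real

lemma half_rpow_sub_mul_rpow_add_one {τ : ℝ} (hτ : 0 < τ) (a k : ℝ) :
    1 / 2 * τ ^ a - k / 2 * τ ^ (a + 1) = τ ^ a * (1 - k * τ) / 2 := by
  rw [rpow_add hτ, rpow_one]; ring

theorem rpow_sub_rpow_at_scaled_peak_gt {a q κ M c cstar : ℝ} (ha : 0 < a) (hq : 0 ≤ q)
    (hκ : 0 < κ) (hM : 0 < M) (hc : 0 < c) (hccstar : c < cstar)
    (hcstar : cstar ^ (2 * a + q) = (a / ((a + 1) * κ)) ^ a / (2 * (a + 1) * M)) :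
    1 / 2 * (c / cstar * (a / ((a + 1) * κ * cstar))) ^ a -
        κ * c / 2 * (c / cstar * (a / ((a + 1) * κ * cstar))) ^ (a + 1) >
      M * c ^ (a + q) := by
  have hcs : 0 < cstar := hc.trans hccstar
  set s := c / cstar with hs
  have hs0 : 0 < s := div_pos hc hcs
  have hs1 : s < 1 := (div_lt_one hcs).2 hccstar
  have hc_eq : c = s * cstar := by rw [hs, div_mul_cancel₀ _ hcs.ne']
  have hpeak : 0 < a / ((a + 1) * κ) := by positivity
  have hτ : s * (a / ((a + 1) * κ * cstar)) = s * (a / ((a + 1) * κ)) / cstar := by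
    rw [mul_div_assoc, div_div]
  have hlin : κ * c * (s * (a / ((a + 1) * κ * cstar))) = s ^ 2 * a / (a + 1) := by
    rw [hc_eq]; field_simp
  have hpow : (s * (a / ((a + 1) * κ)) / cstar) ^ a =
      2 * (a + 1) * M * s ^ a * cstar ^ (a + q) := by
    have hpeak_pow : (a / ((a + 1) * κ)) ^ a = 2 * (a + 1) * M * cstar ^ (2 * a + q) := by
      rw [hcstar]; field_simp
    rw [div_rpow (by positivity) hcs.le, mul_rpow hs0.le hpeak.le, hpeak_pow,
      show 2 * a + q = a + (a + q) by ring, rpow_add hcs]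
    field_simp
  have hrhs : M * c ^ (a + q) = M * s ^ a * cstar ^ (a + q) * s ^ q := by
    rw [hc_eq, mul_rpow hs0.le hcs.le, rpow_add hs0]; ring
  have hsq : s ^ q < a + 1 - a * s ^ 2 := by
    have : s ^ 2 < 1 := pow_lt_one₀ hs0.le hs1 two_ne_zero
    have : s ^ q ≤ 1 := rpow_le_one hs0.le hs1.le hq
    nlinarith
  rw [half_rpow_sub_mul_rpow_add_one (by positivity), hlin, hτ, hpow, hrhs, gt_iff_lt]
  have : 0 < M * s ^ a * cstar ^ (a + q) := by positivity
  calc M * s ^ a * cstar ^ (a + q) * s ^ q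
      < M * s ^ a * cstar ^ (a + q) * (a + 1 - a * s ^ 2) := by gcongr
    _ = _ := by field_simp

/-- For `0 < c < c_*`, `φ_c((c/c_*) t_{c_*}) > 2|λ₃|C_p^p c^{p(1-δ_p)}/p`, where
`φ_c(t) = ½t^{2-pδ_p} - (ΛC₄⁴c/2) t^{3-pδ_p}` and `t_{c_*} = (2-pδ_p)/((3-pδ_p)ΛC₄⁴c_*)`. -/
theorem stmt_9 (c lam3 p δp Λ C4 Cp : ℝ) (hc : 0 < c) (hlam3 : lam3 < 0)
    (hp : 2 < p) (hp' : p < 10 / 3) (hδ : δp = 3 * (p - 2) / (2 * p))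
    (hΛ : 0 < Λ) (hC4 : 0 < C4) (hCp : 0 < Cp)
    (cstar tstar : ℝ)
    (hcstar : cstar = (p / (4 * (3 - p * δp) * |lam3| * Cp ^ p) *
        ((2 - p * δp) / ((3 - p * δp) * Λ * C4 ^ 4)) ^ (2 - p * δp))
          ^ (1 / (2 * (4 - p))))
    (hccstar : c < cstar)
    (htstar : tstar = (2 - p * δp) / ((3 - p * δp) * Λ * C4 ^ 4 * cstar)) :
    (1 / 2) * (c / cstar * tstar) ^ (2 - p * δp) -
        Λ * C4 ^ 4 * c / 2 * (c / cstar * tstar) ^ (3 - p * δp) >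
      2 * |lam3| * Cp ^ p * c ^ (p * (1 - δp)) / p := by
  have hpδ : p * δp = 3 * (p - 2) / 2 := by rw [hδ]; field_simp
  set a := 2 - p * δp with ha_def
  have ha : 0 < a := by rw [ha_def, hpδ]; linarith
  have hsucc : 3 - p * δp = a + 1 := by ring
  have hexp : 2 * a + (p - 2) = 2 * (4 - p) := by rw [ha_def, hpδ]; ring
  set κ := Λ * C4 ^ 4 with hκ
  rw [hsucc, mul_assoc _ Λ, ← hκ] at hcstar htstar
  set M := 2 * |lam3| * Cp ^ p / p with hM_def
  have hlam : 0 < |lam3| := abs_pos.2 hlam3.ne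
  have hM : 0 < M := by positivity
  have hcstar_pow :
      cstar ^ (2 * a + (p - 2)) = (a / ((a + 1) * κ)) ^ a / (2 * (a + 1) * M) := by
    have hbase : 0 ≤ p / (4 * (a + 1) * |lam3| * Cp ^ p) * (a / ((a + 1) * κ)) ^ a := by
      positivity
    rw [hcstar, ← rpow_mul hbase, hexp, one_div_mul_cancel (by linarith), rpow_one, hM_def]
    field_simp
    ring
  rw [htstar, hsucc, show p * (1 - δp) = a + (p - 2) by ring,
    show 2 * |lam3| * Cp ^ p * c ^ (a + (p - 2)) / p = M * c ^ (a + (p - 2)) by ring]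
  exact rpow_sub_rpow_at_scaled_peak_gt ha (by linarith) (by positivity) hM hc hccstar hcstar_pow
end

section
/- Let $c>0$, $\lambda_3<0$, $2<p<\frac{10}{3}$, $\delta_p=\frac{3(p-2)}{2p}$, and suppose $0<c<c_*$. Then the function $h_c(t)=\frac{1}{2}t^2-\frac{\Lambda\mathcal{C}_4^4 c}{2}t^3-\frac{2|\lambda_3|\mathcal{C}_p^p c^{p(1-\delta_p)}}{p}t^{p\delta_p}$ has exactly two zeros $0<R_0(c)<R_1(c)$ in $(0,\infty)$, satisfies $h_c(t)>0$ if and only if $t\in(R_0(c),R_1(c))$, and attains a strictly negative local minimum on $(0,R_0(c))$ and a strictly positive global maximum on $(R_0(c),R_1(c))$. -/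
/-!
Write `h_c(t) = t² (1/2 - a t - b t^(q-2))` with `a, b > 0` and `q = pδ_p ∈ (0, 2)`. The second
factor is strictly concave on `(0, ∞)` and tends to `-∞` at both ends, so as soon as it is positive
somewhere it has exactly two zeros and is positive exactly between them; `h_c` inherits this sign
pattern. Since `h_c(0) = 0`, the minimum of `h_c` on `[0, R₀]` and its maximum on `[R₀, R₁]` are
interior extrema with the stated signs. The condition `c < c_*` says precisely that the second factor
is positive at `t = (2 - q)/(2a(3 - q))`.
-/

open Real Set Filter Topology

structure IsSignPattern (f : ℝ → ℝ) (R₀ R₁ : ℝ) : Prop where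
  pos : 0 < R₀
  lt : R₀ < R₁
  neg_left : ∀ t ∈ Ioo 0 R₀, f t < 0
  zero_left : f R₀ = 0
  pos_mid : ∀ t ∈ Ioo R₀ R₁, 0 < f t
  zero_right : f R₁ = 0
  neg_right : ∀ t ∈ Ioi R₁, f t < 0

namespace IsSignPattern

variable {f : ℝ → ℝ} {R₀ R₁ : ℝ}

theorem eq_zero_iff (hf : IsSignPattern f R₀ R₁) {t : ℝ} (ht : 0 < t) :
    f t = 0 ↔ t = R₀ ∨ t = R₁ := by
  constructor
  · intro hft
    rcases lt_trichotomy t R₀ with h | rfl | h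
    · exact absurd hft (hf.neg_left t ⟨ht, h⟩).ne
    · exact .inl rfl
    rcases lt_trichotomy t R₁ with h' | rfl | h'
    · exact absurd hft (hf.pos_mid t ⟨h, h'⟩).ne'
    · exact .inr rfl
    · exact absurd hft (hf.neg_right t h').ne
  · rintro (rfl | rfl)
    exacts [hf.zero_left, hf.zero_right]

theorem pos_iff (hf : IsSignPattern f R₀ R₁) {t : ℝ} (ht : 0 < t) :
    0 < f t ↔ R₀ < t ∧ t < R₁ := by
  refine ⟨fun hft => ⟨?_, ?_⟩, hf.pos_mid t⟩
  · by_contra! h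
    rcases h.eq_or_lt with rfl | h
    · exact hft.ne' hf.zero_left
    · exact (hf.neg_left t ⟨ht, h⟩).not_gt hft
  · by_contra! h
    rcases h.eq_or_lt with rfl | h
    · exact hft.ne' hf.zero_right
    · exact (hf.neg_right t h).not_gt hft

theorem of_eq_mul {g k : ℝ → ℝ} (hk : IsSignPattern k R₀ R₁) (hg : ∀ t > 0, 0 < g t)
    (hf : ∀ t > 0, f t = g t * k t) : IsSignPattern f R₀ R₁ where
  pos := hk.pos
  lt := hk.lt
  neg_left t ht := by
    rw [hf t ht.1]
    exact mul_neg_of_pos_of_neg (hg t ht.1) (hk.neg_left t ht)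
  zero_left := by rw [hf R₀ hk.pos, hk.zero_left, mul_zero]
  pos_mid t ht := by
    have ht₀ : 0 < t := hk.pos.trans ht.1
    rw [hf t ht₀]
    exact mul_pos (hg t ht₀) (hk.pos_mid t ht)
  zero_right := by rw [hf R₁ (hk.pos.trans hk.lt), hk.zero_right, mul_zero]
  neg_right t ht := by
    have ht₀ : 0 < t := (hk.pos.trans hk.lt).trans ht
    rw [hf t ht₀]
    exact mul_neg_of_pos_of_neg (hg t ht₀) (hk.neg_right t ht)

theorem exists_isLocalMin_neg (hf : IsSignPattern f R₀ R₁) (hc : ContinuousOn f (Icc 0 R₀))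
    (h₀ : f 0 = 0) : ∃ t ∈ Ioo 0 R₀, IsLocalMin f t ∧ f t < 0 := by
  obtain ⟨t, ht, hmin⟩ := isCompact_Icc.exists_isMinOn (nonempty_Icc.2 hf.pos.le) hc
  have hneg : f t < 0 := (hmin ⟨by linarith [hf.pos], by linarith [hf.pos]⟩).trans_lt
    (hf.neg_left (R₀ / 2) ⟨by linarith [hf.pos], by linarith [hf.pos]⟩)
  have ht' : t ∈ Ioo 0 R₀ :=
    ⟨ht.1.lt_of_ne (by rintro rfl; linarith), ht.2.lt_of_ne (by rintro rfl; linarith [hf.zero_left])⟩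
  exact ⟨t, ht', hmin.isLocalMin (Icc_mem_nhds ht'.1 ht'.2), hneg⟩

theorem exists_pos_isMaxOn (hf : IsSignPattern f R₀ R₁) (hc : ContinuousOn f (Icc R₀ R₁)) :
    ∃ t ∈ Ioo R₀ R₁, 0 < f t ∧ ∀ s > 0, f s ≤ f t := by
  obtain ⟨t, ht, hmax⟩ := isCompact_Icc.exists_isMaxOn (nonempty_Icc.2 hf.lt.le) hc
  have hmid : (R₀ + R₁) / 2 ∈ Ioo R₀ R₁ := ⟨by linarith [hf.lt], by linarith [hf.lt]⟩
  have hpos : 0 < f t := (hf.pos_mid _ hmid).trans_le (hmax (Ioo_subset_Icc_self hmid))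
  have ht' : t ∈ Ioo R₀ R₁ :=
    ⟨ht.1.lt_of_ne (by rintro rfl; linarith [hf.zero_left]),
      ht.2.lt_of_ne (by rintro rfl; linarith [hf.zero_right])⟩
  refine ⟨t, ht', hpos, fun s hs => ?_⟩
  by_cases hsR : s ∈ Icc R₀ R₁
  · exact hmax hsR
  · refine (not_lt.mp fun hfs => hsR ?_).trans hpos.le
    exact Ioo_subset_Icc_self ((hf.pos_iff hs).mp hfs)

end IsSignPattern

theorem StrictConcaveOn.isSignPattern {f : ℝ → ℝ} {R₀ R₁ : ℝ}
    (hf : StrictConcaveOn ℝ (Ioi 0) f) (h₀ : 0 < R₀) (h₀₁ : R₀ < R₁) (hR₀ : f R₀ = 0)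
    (hR₁ : f R₁ = 0) : IsSignPattern f R₀ R₁ := by
  have key : ∀ {x y z : ℝ}, 0 < x → x < y → y < z → min (f x) (f z) < f y := fun hx hxy hyz =>
    hf.lt_on_openSegment hx (hx.trans (hxy.trans hyz)) (hxy.trans hyz).ne
      (by rw [openSegment_eq_Ioo (hxy.trans hyz)]; exact ⟨hxy, hyz⟩)
  refine ⟨h₀, h₀₁, fun t ht => ?_, hR₀, fun t ht => ?_, hR₁, fun t ht => ?_⟩
  · simpa [hR₀, hR₁] using key ht.1 ht.2 h₀₁
  · simpa [hR₀, hR₁] using key h₀ ht.1 ht.2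
  · simpa [hR₀, hR₁] using key h₀ h₀₁ ht

theorem StrictConcaveOn.exists_isSignPattern {f : ℝ → ℝ} (hf : StrictConcaveOn ℝ (Ioi 0) f)
    (h₀ : Tendsto f (𝓝[>] 0) atBot) (h_top : Tendsto f atTop atBot) {s : ℝ} (hs : 0 < s)
    (hfs : 0 < f s) : ∃ R₀ R₁, IsSignPattern f R₀ R₁ := by
  have hc : ContinuousOn f (Ioi 0) := hf.concaveOn.continuousOn isOpen_Ioi
  obtain ⟨ε, hfε, hε⟩ := ((h₀.eventually (eventually_lt_atBot 0)).and
    (Ioo_mem_nhdsGT hs)).exists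
  obtain ⟨M, hfM, hM⟩ := ((h_top.eventually (eventually_lt_atBot 0)).and
    (eventually_gt_atTop s)).exists
  obtain ⟨R₀, hR₀, hfR₀⟩ := intermediate_value_Ioo hε.2.le
    (hc.mono fun x hx => hε.1.trans_le hx.1) ⟨hfε, hfs⟩
  obtain ⟨R₁, hR₁, hfR₁⟩ := intermediate_value_Ioo' hM.le
    (hc.mono fun x hx => hs.trans_le hx.1) ⟨hfM, hfs⟩
  exact ⟨R₀, R₁, hf.isSignPattern (hε.1.trans hR₀.1) (hR₀.2.trans hR₁.1) hfR₀ hfR₁⟩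

noncomputable def profile (a b q t : ℝ) : ℝ := 1 / 2 * t ^ 2 - a * t ^ 3 - b * t ^ q

noncomputable def reducedProfile (a b q t : ℝ) : ℝ := 1 / 2 - a * t - b * t ^ (q - 2)

section Profile

variable {a b q : ℝ}

theorem profile_eq_sq_mul {t : ℝ} (ht : 0 < t) :
    profile a b q t = t ^ 2 * reducedProfile a b q t := by
  have h : t ^ q = t ^ 2 * t ^ (q - 2) := by
    rw [← rpow_natCast t 2, ← rpow_add ht]
    norm_num
  rw [profile, reducedProfile, h]
  ring

theorem profile_zero (hq : q ≠ 0) : profile a b q 0 = 0 := by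
  simp [profile, zero_rpow hq]

theorem continuous_profile (hq : 0 ≤ q) : Continuous (profile a b q) := by
  unfold profile
  fun_prop (disch := assumption)

theorem hasDerivAt_reducedProfile {x : ℝ} (hx : 0 < x) :
    HasDerivAt (reducedProfile a b q) (-a - b * ((q - 2) * x ^ (q - 2 - 1))) x := by
  have h := ((hasDerivAt_id x).const_mul a).const_sub (1 / 2) |>.sub
    ((hasDerivAt_rpow_const (p := q - 2) (Or.inl hx.ne')).const_mul b)
  rw [mul_one] at h
  exact h

theorem strictConcaveOn_reducedProfile (hb : 0 < b) (hq : q < 2) :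
    StrictConcaveOn ℝ (Ioi 0) (reducedProfile a b q) := by
  refine StrictAntiOn.strictConcaveOn_of_deriv (convex_Ioi 0)
    (fun x hx => (hasDerivAt_reducedProfile hx).continuousAt.continuousWithinAt) ?_
  rw [interior_Ioi]
  intro x hx y hy hxy
  rw [(hasDerivAt_reducedProfile hy).deriv, (hasDerivAt_reducedProfile hx).deriv]
  have hpow : y ^ (q - 2 - 1) < x ^ (q - 2 - 1) := rpow_lt_rpow_of_neg hx hxy (by linarith)
  have hcoeff : 0 < b * (2 - q) := mul_pos hb (by linarith)
  nlinarith

theorem tendsto_reducedProfile_nhdsGT_zero (hb : 0 < b) (hq : q < 2) :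
    Tendsto (reducedProfile a b q) (𝓝[>] 0) atBot := by
  have hlin : Tendsto (fun t => 1 / 2 - a * t) (𝓝[>] 0) (𝓝 (1 / 2 - a * 0)) :=
    (continuous_const.sub (continuous_const.mul continuous_id)).continuousAt.tendsto.mono_left
      nhdsWithin_le_nhds
  have hpow : Tendsto (fun t => b * t ^ (q - 2)) (𝓝[>] 0) atTop :=
    (tendsto_rpow_neg_nhdsGT_zero (by linarith)).const_mul_atTop hb
  refine (hlin.add_atBot (tendsto_neg_atTop_atBot.comp hpow)).congr fun t => ?_
  simp only [Function.comp_apply, reducedProfile]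
  ring

theorem tendsto_reducedProfile_atTop (ha : 0 < a) (hb : 0 ≤ b) :
    Tendsto (reducedProfile a b q) atTop atBot := by
  have hlin : Tendsto (fun t => 1 / 2 - a * t) atTop atBot := by
    refine (tendsto_atBot_add_const_left atTop (1 / 2)
      (tendsto_neg_atTop_atBot.comp (tendsto_id.const_mul_atTop ha))).congr fun t => ?_
    simp only [Function.comp_apply, id]
    ring
  refine tendsto_atBot_mono' atTop ?_ hlin
  filter_upwards [eventually_gt_atTop 0] with t ht
  have hpow := mul_nonneg hb (rpow_pos_of_pos ht (q - 2)).le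
  simp only [reducedProfile]
  linarith

/-- At this point `1/2 - a t = 1/(2(3 - q))`; the hypothesis is the smallness condition that
defines `c_*`. -/
theorem reducedProfile_pos (ha : 0 < a) (hq : q < 2)
    (hb : 2 * (3 - q) * b < ((2 - q) / (2 * a * (3 - q))) ^ (2 - q)) :
    0 < reducedProfile a b q ((2 - q) / (2 * a * (3 - q))) := by
  set Y := (2 - q) / (2 * a * (3 - q))
  have hY : 0 < Y := div_pos (by linarith) (by nlinarith)
  have hYq : 0 < Y ^ (2 - q) := rpow_pos_of_pos hY _
  have hlin : 1 / 2 - a * Y = 1 / (2 * (3 - q)) := by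
    have h3q : 3 - q ≠ 0 := by linarith
    simp only [Y]
    field_simp
    ring
  have hpow : Y ^ (q - 2) = (Y ^ (2 - q))⁻¹ := by rw [← rpow_neg hY.le, neg_sub]
  rw [reducedProfile, hlin, hpow, ← div_eq_mul_inv, sub_pos, div_lt_div_iff₀ hYq (by linarith)]
  linarith

theorem exists_isSignPattern_profile (ha : 0 < a) (hb : 0 < b) (hq : q < 2)
    (hab : 2 * (3 - q) * b < ((2 - q) / (2 * a * (3 - q))) ^ (2 - q)) :
    ∃ R₀ R₁, IsSignPattern (profile a b q) R₀ R₁ := by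
  obtain ⟨R₀, R₁, hR⟩ := (strictConcaveOn_reducedProfile hb hq).exists_isSignPattern
    (tendsto_reducedProfile_nhdsGT_zero hb hq) (tendsto_reducedProfile_atTop ha hb.le)
    (div_pos (by linarith) (by nlinarith)) (reducedProfile_pos ha hq hab)
  exact ⟨R₀, R₁, hR.of_eq_mul (fun t ht => pow_pos ht 2) fun t ht => profile_eq_sq_mul ht⟩

end Profile

theorem coeff_lt_of_lt_cstar {c lam3 p δp Λ C4 Cp : ℝ} (hc : 0 < c) (hlam3 : lam3 ≠ 0)
    (hp : 2 < p) (hp' : p < 10 / 3) (hδ : δp = 3 * (p - 2) / (2 * p)) (hΛ : 0 < Λ)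
    (hC4 : 0 < C4) (hCp : 0 < Cp)
    (hccstar : c < (p / (4 * (3 - p * δp) * |lam3| * Cp ^ p) *
        ((2 - p * δp) / ((3 - p * δp) * Λ * C4 ^ 4)) ^ (2 - p * δp)) ^ (1 / (2 * (4 - p)))) :
    2 * (3 - p * δp) * (2 * |lam3| * Cp ^ p * c ^ (p * (1 - δp)) / p) <
      ((2 - p * δp) / (2 * (Λ * C4 ^ 4 * c / 2) * (3 - p * δp))) ^ (2 - p * δp) := by
  have hq : p * δp = 3 * (p - 2) / 2 := by rw [hδ]; field_simp
  have hq₀ : 0 < p * δp := by linarith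
  have hexp : p * (1 - δp) = 2 * (4 - p) + (p * δp - 2) := by rw [mul_one_sub, hq]; ring
  set q := p * δp
  have h3q : 0 < 3 - q := by linarith
  set W := (2 - q) / ((3 - q) * Λ * C4 ^ 4)
  have hW : 0 < W := div_pos (by linarith) (by positivity)
  set A := 4 * (3 - q) * |lam3| * Cp ^ p
  have hA : 0 < A := by positivity
  have hcK : c ^ (2 * (4 - p)) < p / A * W ^ (2 - q) := by
    rwa [one_div, lt_rpow_inv_iff_of_pos hc.le (by positivity) (by linarith)] at hccstar
  have hY : (2 - q) / (2 * (Λ * C4 ^ 4 * c / 2) * (3 - q)) = W / c := by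
    simp only [W]
    field_simp
  rw [hY]
  calc 2 * (3 - q) * (2 * |lam3| * Cp ^ p * c ^ (p * (1 - δp)) / p)
      = A / p * c ^ (2 * (4 - p)) * c ^ (q - 2) := by
        rw [hexp, rpow_add hc]
        ring
    _ < A / p * (p / A * W ^ (2 - q)) * c ^ (q - 2) := by gcongr
    _ = (W / c) ^ (2 - q) := by
        rw [div_rpow hW.le hc.le, div_eq_mul_inv _ (c ^ _), ← rpow_neg hc.le, neg_sub]
        field_simp

/-- For `0 < c < c_*`, the function
`h_c(t) = ½t² - (ΛC₄⁴c/2)t³ - (2|λ₃|C_p^p c^{p(1-δ_p)}/p) t^{pδ_p}` has exactly two zeros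
`0 < R₀ < R₁` in `(0,∞)`, is positive precisely on `(R₀,R₁)`, attains a strictly negative
local minimum on `(0,R₀)` and a strictly positive global maximum on `(R₀,R₁)`. -/
theorem stmt_10 (c lam3 p δp Λ C4 Cp : ℝ) (hc : 0 < c) (hlam3 : lam3 < 0)
    (hp : 2 < p) (hp' : p < 10 / 3) (hδ : δp = 3 * (p - 2) / (2 * p))
    (hΛ : 0 < Λ) (hC4 : 0 < C4) (hCp : 0 < Cp)
    (cstar : ℝ)
    (hcstar : cstar = (p / (4 * (3 - p * δp) * |lam3| * Cp ^ p) *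
        ((2 - p * δp) / ((3 - p * δp) * Λ * C4 ^ 4)) ^ (2 - p * δp))
          ^ (1 / (2 * (4 - p))))
    (hccstar : c < cstar) :
    ∃ R0 R1 : ℝ, 0 < R0 ∧ R0 < R1 ∧
      (∀ t : ℝ, 0 < t →
        ((1 / 2) * t ^ 2 - Λ * C4 ^ 4 * c / 2 * t ^ 3 -
            2 * |lam3| * Cp ^ p * c ^ (p * (1 - δp)) / p * t ^ (p * δp) = 0
          ↔ t = R0 ∨ t = R1)) ∧
      (∀ t : ℝ, 0 < t →
        ((1 / 2) * t ^ 2 - Λ * C4 ^ 4 * c / 2 * t ^ 3 -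
            2 * |lam3| * Cp ^ p * c ^ (p * (1 - δp)) / p * t ^ (p * δp) > 0
          ↔ R0 < t ∧ t < R1)) ∧
      (∃ t0 ∈ Set.Ioo 0 R0,
        IsLocalMin (fun t : ℝ => (1 / 2) * t ^ 2 - Λ * C4 ^ 4 * c / 2 * t ^ 3 -
            2 * |lam3| * Cp ^ p * c ^ (p * (1 - δp)) / p * t ^ (p * δp)) t0 ∧
        (1 / 2) * t0 ^ 2 - Λ * C4 ^ 4 * c / 2 * t0 ^ 3 -
            2 * |lam3| * Cp ^ p * c ^ (p * (1 - δp)) / p * t0 ^ (p * δp) < 0) ∧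
      (∃ t1 ∈ Set.Ioo R0 R1,
        ((1 / 2) * t1 ^ 2 - Λ * C4 ^ 4 * c / 2 * t1 ^ 3 -
            2 * |lam3| * Cp ^ p * c ^ (p * (1 - δp)) / p * t1 ^ (p * δp) > 0) ∧
        ∀ t : ℝ, 0 < t →
          (1 / 2) * t ^ 2 - Λ * C4 ^ 4 * c / 2 * t ^ 3 -
              2 * |lam3| * Cp ^ p * c ^ (p * (1 - δp)) / p * t ^ (p * δp) ≤
            (1 / 2) * t1 ^ 2 - Λ * C4 ^ 4 * c / 2 * t1 ^ 3 -
              2 * |lam3| * Cp ^ p * c ^ (p * (1 - δp)) / p * t1 ^ (p * δp)) := by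
  subst hcstar
  have hq : p * δp = 3 * (p - 2) / 2 := by rw [hδ]; field_simp
  have hq₀ : 0 < p * δp := by linarith
  have ha : 0 < Λ * C4 ^ 4 * c / 2 := by positivity
  have hb : 0 < 2 * |lam3| * Cp ^ p * c ^ (p * (1 - δp)) / p := by
    have := abs_pos.2 hlam3.ne
    positivity
  obtain ⟨R₀, R₁, hR⟩ := exists_isSignPattern_profile ha hb (by linarith)
    (coeff_lt_of_lt_cstar hc hlam3.ne hp hp' hδ hΛ hC4 hCp hccstar)
  obtain ⟨t₀, ht₀, hmin, hneg⟩ :=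
    hR.exists_isLocalMin_neg (continuous_profile hq₀.le).continuousOn (profile_zero hq₀.ne')
  obtain ⟨t₁, ht₁, hpos, hmax⟩ := hR.exists_pos_isMaxOn (continuous_profile hq₀.le).continuousOn
  exact ⟨R₀, R₁, hR.pos, hR.lt, fun t ht => hR.eq_zero_iff ht, fun t ht => hR.pos_iff ht,
    ⟨t₀, ht₀, hmin, hneg⟩, ⟨t₁, ht₁, hpos, hmax⟩⟩
end
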